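/- For c ≥ 2, every solution of the linear system V' = V_z, V_z' = −c V_z − V starting in the region {V > 0, −(c/2)V ≤ V_z ≤ 0} remains in the closed fourth quadrant {V ≥ 0, V_z ≤ 0} for all forward time and converges to the origin as z → ∞. -/

import Mathlib

/-!
Since `c ≥ 2`, the characteristic polynomial `x² + c x + 1` has real roots `-μ, -ν` with
`0 < μ ≤ ν`, `μ + ν = c`, `μ ν = 1`. The combination `Q = V_z + ν V` is the slow mode,
`Q' = -μ Q`, so `Q = Q(0) e^{-μ z}`, and `Q(0) ≥ 0` because `ν ≥ c/2`. Everything else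
follows from the comparison principle "`f' = a f + g`, `g ≥ 0`, `f(0) ≥ 0` imply `f ≥ 0`":
`V' = -ν V + Q` gives `V ≥ 0`, then `(-V_z)' = -c (-V_z) + V` gives `V_z ≤ 0`, and
`V ≤ (V(0) + Q(0) z) e^{-μ z}` forces `V → 0`, while `-ν V ≤ V_z ≤ 0` forces `V_z → 0`.
-/

open Real Filter Set Topology

theorem hasDerivAt_exp_neg_mul_mul {f g : ℝ → ℝ} {a x : ℝ}
    (hf : HasDerivAt f (a * f x + g x) x) :
    HasDerivAt (fun x => exp (-a * x) * f x) (exp (-a * x) * g x) x := by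
  have h : HasDerivAt (fun x => exp (-a * x) * f x) _ x :=
    ((hasDerivAt_id x).const_mul (-a)).exp.mul hf
  exact h.congr_deriv (by simp only [id]; ring)

theorem nonneg_of_hasDerivAt_eq_mul_add {f g : ℝ → ℝ} {a : ℝ}
    (hf : ∀ z, HasDerivAt f (a * f z + g z) z) (hg : ∀ z, 0 ≤ z → 0 ≤ g z) (h0 : 0 ≤ f 0)
    {z : ℝ} (hz : 0 ≤ z) : 0 ≤ f z := by
  have hF (x : ℝ) := hasDerivAt_exp_neg_mul_mul (hf x)
  have hmono : MonotoneOn (fun x => exp (-a * x) * f x) (Ici 0) :=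
    monotoneOn_of_hasDerivWithinAt_nonneg (convex_Ici 0)
      (fun x _ => (hF x).continuousAt.continuousWithinAt) (fun x _ => (hF x).hasDerivWithinAt)
      (fun x hx => mul_nonneg (exp_pos _).le (hg x (interior_subset hx)))
  have h := hmono self_mem_Ici hz hz
  simp only [mul_zero, exp_zero, one_mul] at h
  exact nonneg_of_mul_nonneg_right (h0.trans h) (exp_pos _)

theorem eq_mul_exp_of_hasDerivAt_eq_mul {f : ℝ → ℝ} {a : ℝ}
    (hf : ∀ z, HasDerivAt f (a * f z) z) (z : ℝ) : f z = f 0 * exp (a * z) := by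
  have hF (x : ℝ) : HasDerivAt (fun x => exp (-a * x) * f x) 0 x := by
    simpa using hasDerivAt_exp_neg_mul_mul (g := 0) (by simpa using hf x)
  have h := is_const_of_deriv_eq_zero (fun x => (hF x).differentiableAt) (fun x => (hF x).deriv) z 0
  simp only [mul_zero, exp_zero, one_mul, neg_mul, exp_neg] at h
  rw [← h]; field_simp

theorem exists_pos_roots_of_two_le {c : ℝ} (hc : 2 ≤ c) :
    ∃ μ ν : ℝ, 0 < μ ∧ μ ≤ ν ∧ μ + ν = c ∧ μ * ν = 1 := by
  have hs := sq_sqrt (show 0 ≤ c ^ 2 - 4 by nlinarith)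
  have hs0 := sqrt_nonneg (c ^ 2 - 4)
  refine ⟨(c - √(c ^ 2 - 4)) / 2, (c + √(c ^ 2 - 4)) / 2, ?_, by linarith, by ring, by nlinarith⟩
  nlinarith

theorem tendsto_affine_mul_exp_neg_mul_atTop {μ : ℝ} (hμ : 0 < μ) (a b : ℝ) :
    Tendsto (fun z => (a + b * z) * exp (-μ * z)) atTop (𝓝 0) := by
  have h0 := tendsto_rpow_mul_exp_neg_mul_atTop_nhds_zero 0 μ hμ
  have h1 := tendsto_rpow_mul_exp_neg_mul_atTop_nhds_zero 1 μ hμ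
  simp only [rpow_zero, one_mul, rpow_one] at h0 h1
  simpa [add_mul, mul_assoc] using (h0.const_mul a).add (h1.const_mul b)

theorem le_affine_mul_exp_of_hasDerivAt {f : ℝ → ℝ} {μ ν b : ℝ} (hμν : μ ≤ ν)
    (hf : ∀ z, HasDerivAt f (-ν * f z + b * exp (-μ * z)) z) (hf_nonneg : ∀ z, 0 ≤ z → 0 ≤ f z)
    {z : ℝ} (hz : 0 ≤ z) : f z ≤ (f 0 + b * z) * exp (-μ * z) := by
  have hE (x : ℝ) : HasDerivAt (fun x => (f 0 + b * x) * exp (-μ * x))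
      (b * exp (-μ * x) + (f 0 + b * x) * (-μ * exp (-μ * x))) x := by
    have h := (((hasDerivAt_id x).const_mul b).const_add (f 0)).mul
      ((hasDerivAt_id x).const_mul (-μ)).exp
    exact h.congr_deriv (by simp only [id]; ring)
  have h := nonneg_of_hasDerivAt_eq_mul_add (f := fun x => (f 0 + b * x) * exp (-μ * x) - f x)
    (a := -μ) (g := fun x => (ν - μ) * f x) (fun x => ((hE x).sub (hf x)).congr_deriv (by ring))
    (fun x hx => mul_nonneg (sub_nonneg.mpr hμν) (hf_nonneg x hx)) (by simp) hz
  exact sub_nonneg.mp h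

theorem hasDerivAt_add_mul_of_vieta {c μ ν : ℝ} {V Vz : ℝ → ℝ}
    (hV : ∀ z, HasDerivAt V (Vz z) z) (hVz : ∀ z, HasDerivAt Vz (-c * Vz z - V z) z)
    (hsum : μ + ν = c) (hprod : μ * ν = 1) (z : ℝ) :
    HasDerivAt (fun z => Vz z + ν * V z) (-μ * (Vz z + ν * V z)) z :=
  ((hVz z).add ((hV z).const_mul ν)).congr_deriv (by rw [← hsum]; linear_combination V z * hprod)

/-- For `c ≥ 2`, every solution of `V' = V_z`, `V_z' = −cV_z − V` starting
in `{V > 0, −(c/2)V ≤ V_z ≤ 0}` remains in the closed fourth quadrant for all forward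
time and converges to the origin. -/
theorem linear_system_forward_invariance_and_convergence (c : ℝ) (hc : 2 ≤ c)
    (V Vz : ℝ → ℝ)
    (hV : ∀ z, HasDerivAt V (Vz z) z)
    (hVz : ∀ z, HasDerivAt Vz (-c * Vz z - V z) z)
    (h0 : 0 < V 0) (h1 : -(c / 2) * V 0 ≤ Vz 0) (h2 : Vz 0 ≤ 0) :
    (∀ z, 0 ≤ z → 0 ≤ V z ∧ Vz z ≤ 0) ∧
    Filter.Tendsto (fun z => (V z, Vz z)) Filter.atTop (nhds (0, 0)) := by
  obtain ⟨μ, ν, hμ, hμν, hsum, hprod⟩ := exists_pos_roots_of_two_le hc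
  set Q₀ := Vz 0 + ν * V 0
  have hQ₀ : 0 ≤ Q₀ := by nlinarith
  have hQ (z : ℝ) : Vz z + ν * V z = Q₀ * exp (-μ * z) :=
    eq_mul_exp_of_hasDerivAt_eq_mul (hasDerivAt_add_mul_of_vieta hV hVz hsum hprod) z
  have hV' (z : ℝ) : HasDerivAt V (-ν * V z + Q₀ * exp (-μ * z)) z :=
    (hV z).congr_deriv (by linarith [hQ z])
  have hV_nonneg {z : ℝ} (hz : 0 ≤ z) : 0 ≤ V z :=
    nonneg_of_hasDerivAt_eq_mul_add hV' (fun z _ => by positivity) h0.le hz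
  have hVz_nonpos {z : ℝ} (hz : 0 ≤ z) : Vz z ≤ 0 :=
    neg_nonneg.mp <| nonneg_of_hasDerivAt_eq_mul_add (f := -Vz) (a := -c) (g := V)
      (fun z => (hVz z).neg.congr_deriv (by simp only [Pi.neg_apply]; ring))
      (fun z hz => hV_nonneg hz) (by simpa using h2) hz
  have hV_le {z : ℝ} (hz : 0 ≤ z) : V z ≤ (V 0 + Q₀ * z) * exp (-μ * z) :=
    le_affine_mul_exp_of_hasDerivAt hμν hV' (fun z hz => hV_nonneg hz) hz
  refine ⟨fun z hz => ⟨hV_nonneg hz, hVz_nonpos hz⟩, ?_⟩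
  have hV_lim : Tendsto V atTop (𝓝 0) :=
    tendsto_of_tendsto_of_tendsto_of_le_of_le' tendsto_const_nhds
      (tendsto_affine_mul_exp_neg_mul_atTop hμ _ _)
      (eventually_ge_atTop 0 |>.mono fun z hz => hV_nonneg hz)
      (eventually_ge_atTop 0 |>.mono fun z hz => hV_le hz)
  have hVz_lim : Tendsto Vz atTop (𝓝 0) :=
    tendsto_of_tendsto_of_tendsto_of_le_of_le' (by simpa using hV_lim.const_mul (-ν))
      tendsto_const_nhds
      (eventually_ge_atTop 0 |>.mono fun z hz => by nlinarith [hQ z, exp_pos (-μ * z)])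
      (eventually_ge_atTop 0 |>.mono fun z hz => hVz_nonpos hz)
  exact hV_lim.prodMk_nhds hVz_lim
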